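/- The cone over the Ish arrangement c(Ish_ℓ) is a free arrangement with exponents (0, 1, ℓ, ℓ, …, ℓ), where ℓ appears ℓ−1 times. -/

import Mathlib

open MvPolynomial

noncomputable section

def logDer (K : Type*) [CommRing K] {σ : Type*} (A : Set (MvPolynomial σ K)) :
    Submodule (MvPolynomial σ K)
      (Derivation K (MvPolynomial σ K) (MvPolynomial σ K)) where
  carrier := {θ | ∀ α ∈ A, θ α ∈ Ideal.span {α}}
  add_mem' := by
    intro θ η hθ hη α hα
    simpa using Ideal.add_mem _ (hθ α hα) (hη α hα)
  zero_mem' := by intro α hα; simp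
  smul_mem' := by
    intro r θ hθ α hα
    simpa [smul_eq_mul] using Ideal.mul_mem_left _ r (hθ α hα)

def IsHomogDeriv {K : Type*} [CommRing K] {σ : Type*}
    (θ : Derivation K (MvPolynomial σ K) (MvPolynomial σ K)) (d : ℕ) : Prop :=
  ∀ i : σ, (θ (X i)).IsHomogeneous d

/-- The defining linear forms of the cone over the Ish arrangement `Ish_ℓ` with
`ℓ = m+1 ≥ 1`: the forms are `z`, `x_i - x_j` (1 ≤ i < j ≤ ℓ) and `x_1 - x_j - i z`
(1 ≤ i < j ≤ ℓ), in `K^{ℓ+1}`. Variables: `some i` is `x_{i+1}` for `i : Fin ℓ`,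
`none` is `z`. -/
def coneIshL (K : Type*) [CommRing K] (m : ℕ) :
    Set (MvPolynomial (Option (Fin (m + 1))) K) :=
  {X none} ∪
    {p | ∃ i j : Fin (m + 1), i < j ∧ p = X (some i) - X (some j)} ∪
    {p | ∃ i j : Fin (m + 1), i < j ∧
      p = X (some 0) - X (some j) - C ((i : ℕ) + 1 : K) * X none}

/-!
Write `x₀, …, x_m` for the coordinates (the paper's `x₁, …, x_ℓ`) and `z` for the cone variable.
For `1 ≤ t ≤ m` let `P_t(s) = ∏_{c ≤ t} (s - x₀ + c z) · ∏_{j > t} (s - x_j)`. The basis is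
`θ₀ = ∑ ∂/∂x_j`, the Euler derivation `θ₁`, and the derivations `θ_{t+1}` with `θ(z) = 0` and
`θ(x_j) = P_t(x_j)`. These are logarithmic: `θ(x_i - x_j) = P_t(x_i) - P_t(x_j)` is divisible
by `x_i - x_j`, and `θ(x₀ - x_j - c z) = -P_t(x_j)` (as `P_t(x₀) = 0`) vanishes if `j > t` and
otherwise equals `P_t(x₀ - c z) - P_t(x_j)`, since then `c ≤ j ≤ t`.

Evaluated at the pivot variables `z, x₀, x_m, x_{m-1}, …, x₁`, the family is triangular with
diagonal `z, 1, P_m(x_m), …, P₁(x₁)`, all nonzero, so it is linearly independent. Conversely, a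
logarithmic `θ` can be cleared at `z` and `x₀` by multiples of `θ₁` and `θ₀`. If it then also
vanishes at every `x_j` with `j > t`, the forms `x_t - x_j` (`j > t`) and `x₀ - x_t - c z`
(`c ≤ t`) divide `θ(x_t)`; these are the pairwise distinct linear factors of `P_t(x_t)`, so
`P_t(x_t) ∣ θ(x_t)` and a multiple of `θ_{t+1}` clears `x_t`. Descending from `t = m` to `t = 1`
writes `θ` in terms of the family.
-/

theorem Polynomial.prod_X_sub_C_dvd_of_forall_dvd {R ι : Type*} [CommRing R] [IsDomain R]
    {s : Finset ι} {c : ι → R} (hc : Set.InjOn c s) {p : Polynomial R}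
    (h : ∀ a ∈ s, Polynomial.X - Polynomial.C (c a) ∣ p) :
    ∏ a ∈ s, (Polynomial.X - Polynomial.C (c a)) ∣ p := by
  rcases eq_or_ne p 0 with rfl | hp
  · exact dvd_zero _
  have hroots : s.val.map c ≤ p.roots :=
    (Multiset.le_iff_subset (s.nodup.map_on fun a ha b hb => hc ha hb)).mpr fun x hx => by
      obtain ⟨a, ha, rfl⟩ := Multiset.mem_map.mp hx
      exact (mem_roots hp).mpr (dvd_iff_isRoot.mp (h a ha))
  have := (Multiset.prod_X_sub_C_dvd_iff_le_roots hp _).mpr hroots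
  rwa [Multiset.map_map] at this

namespace MvPolynomial

theorem X_sub_ne_zero_of_notMem_vars {σ R : Type*} [CommRing R] [Nontrivial R] {i : σ}
    {ρ : MvPolynomial σ R} (h : i ∉ ρ.vars) : X i - ρ ≠ 0 :=
  sub_ne_zero.mpr fun he => h (he ▸ by simp [vars_X])

theorem prod_X_sub_dvd_of_forall_dvd {σ R ι : Type*} [CommRing R] [IsDomain R]
    {i : σ} {s : Finset ι} {ρ : ι → MvPolynomial σ R} (hρ : Set.InjOn ρ s)
    (hvars : ∀ a ∈ s, i ∉ (ρ a).vars) {f : MvPolynomial σ R}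
    (h : ∀ a ∈ s, X i - ρ a ∣ f) : ∏ a ∈ s, (X i - ρ a) ∣ f := by
  classical
  let e : MvPolynomial σ R ≃ₐ[R] Polynomial (MvPolynomial {j // j ≠ i} R) :=
    (renameEquiv R (Equiv.optionSubtypeNe i).symm).trans (optionEquivLeft R _)
  have he_X : e (X i) = Polynomial.X := by simp [e]
  have he_ρ : ∀ a ∈ s, e (ρ a) = Polynomial.C ((e (ρ a)).coeff 0) := fun a ha =>
    Polynomial.eq_C_of_natDegree_eq_zero <| by
      show (optionEquivLeft R _ (rename _ (ρ a))).natDegree = 0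
      rw [← degreeOf_eq_natDegree]
      simpa [mem_vars_iff_degreeOf_ne_zero] using hvars a ha
  have he_prod : e (∏ a ∈ s, (X i - ρ a))
      = ∏ a ∈ s, (Polynomial.X - Polynomial.C ((e (ρ a)).coeff 0)) := by
    rw [map_prod]
    exact Finset.prod_congr rfl fun a ha => by rw [map_sub, he_X, ← he_ρ a ha]
  have key : ∏ a ∈ s, (Polynomial.X - Polynomial.C ((e (ρ a)).coeff 0)) ∣ e f := by
    refine Polynomial.prod_X_sub_C_dvd_of_forall_dvd
      (fun a ha b hb hab => hρ ha hb (e.injective ?_)) fun a ha => ?_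
    · rw [he_ρ a ha, he_ρ b hb, hab]
    · rw [← he_X, ← he_ρ a ha, ← map_sub]
      exact map_dvd e (h a ha)
  rw [← he_prod] at key
  exact (map_dvd_iff e).mp key

end MvPolynomial

theorem mem_logDer_iff {K σ : Type*} [CommRing K] {A : Set (MvPolynomial σ K)}
    {θ : Derivation K (MvPolynomial σ K) (MvPolynomial σ K)} :
    θ ∈ logDer K A ↔ ∀ α ∈ A, α ∣ θ α :=
  forall₂_congr fun _ _ => Ideal.mem_span_singleton

def Derivation.applyₗ {R A M : Type*} [CommSemiring R] [CommSemiring A] [Algebra R A]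
    [AddCommMonoid M] [Module A M] [Module R M] [IsScalarTower R A M] (a : A) :
    Derivation R A M →ₗ[A] M where
  toFun D := D a
  map_add' _ _ := rfl
  map_smul' _ _ := rfl

section Triangular

variable {R M ι : Type*} [CommRing R] [AddCommGroup M] [Module R M] [Fintype ι]
  {v : ι → M} {φ : ι → M →ₗ[R] R} {r : ι → ℕ}

theorem linearIndependent_of_triangular [IsDomain R] (hr : Function.Injective r)
    (hpiv : ∀ i, φ i (v i) ≠ 0) (htri : ∀ i j, r i < r j → φ i (v j) = 0) :
    LinearIndependent R v := by
  refine Fintype.linearIndependent_iff.mpr fun g hg i => ?_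
  induction hi : r i using Nat.strong_induction_on generalizing i with
  | _ n ih =>
    have hφ : ∑ j, g j * φ i (v j) = 0 := by simpa using congrArg (φ i) hg
    rw [Finset.sum_eq_single i (fun j _ hji => ?_) (by simp)] at hφ
    · exact (mul_eq_zero.mp hφ).resolve_right (hpiv i)
    rcases lt_trichotomy (r j) (r i) with hlt | heq | hgt
    · rw [ih (r j) (hi ▸ hlt) j rfl, zero_mul]
    · exact absurd (hr heq) hji
    · rw [htri i j hgt, mul_zero]

theorem le_span_of_triangular {N : Submodule R M} (hr : Function.Injective r)
    (hvN : ∀ i, v i ∈ N) (htri : ∀ i j, r i < r j → φ i (v j) = 0)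
    (hsep : ∀ x ∈ N, (∀ i, φ i x = 0) → x = 0)
    (hdvd : ∀ x ∈ N, ∀ i, (∀ j, r j < r i → φ j x = 0) → φ i (v i) ∣ φ i x) :
    N ≤ Submodule.span R (Set.range v) := by
  intro x hx
  have hspanN : Submodule.span R (Set.range v) ≤ N :=
    Submodule.span_le.mpr (Set.range_subset_iff.mpr hvN)
  have reduce : ∀ n, ∃ y ∈ Submodule.span R (Set.range v), ∀ j, r j < n → φ j (x - y) = 0 := by
    intro n
    induction n with
    | zero => exact ⟨0, zero_mem _, fun j hj => absurd hj (Nat.not_lt_zero _)⟩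
    | succ n ih =>
      obtain ⟨y, hy, hxy⟩ := ih
      by_cases hn : ∃ i, r i = n
      · obtain ⟨i, rfl⟩ := hn
        obtain ⟨q, hq⟩ := hdvd (x - y) (sub_mem hx (hspanN hy)) i hxy
        refine ⟨y + q • v i, add_mem hy (Submodule.smul_mem _ q (Submodule.subset_span ⟨i, rfl⟩)),
          fun j hj => ?_⟩
        rcases Nat.lt_succ_iff_lt_or_eq.mp hj with hlt | heq
        · simp [← sub_sub, hxy j hlt, htri j i hlt]
        · rw [hr heq]
          simp [← sub_sub, hq, mul_comm]
      · exact ⟨y, hy, fun j hj => hxy j (lt_of_le_of_ne (Nat.lt_succ_iff.mp hj)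
          fun h => hn ⟨j, h⟩)⟩
  obtain ⟨y, hy, hxy⟩ := reduce (Finset.univ.sup r + 1)
  have : x - y = 0 := hsep _ (sub_mem hx (hspanN hy)) fun j =>
    hxy j (Nat.lt_succ_of_le (Finset.le_sup (Finset.mem_univ j)))
  rwa [sub_eq_zero.mp this]

theorem Submodule.exists_basis_of_triangular [IsDomain R] {N : Submodule R M}
    (hr : Function.Injective r) (hvN : ∀ i, v i ∈ N) (hpiv : ∀ i, φ i (v i) ≠ 0)
    (htri : ∀ i j, r i < r j → φ i (v j) = 0)
    (hsep : ∀ x ∈ N, (∀ i, φ i x = 0) → x = 0)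
    (hdvd : ∀ x ∈ N, ∀ i, (∀ j, r j < r i → φ j x = 0) → φ i (v i) ∣ φ i x) :
    ∃ b : Module.Basis ι R N, ∀ i, (b i : M) = v i := by
  have hspan : span R (Set.range v) = N :=
    le_antisymm (span_le.mpr (Set.range_subset_iff.mpr hvN))
      (le_span_of_triangular hr hvN htri hsep hdvd)
  exact ⟨(Module.Basis.span (linearIndependent_of_triangular hr hpiv htri)).map
    (LinearEquiv.ofEq _ _ hspan), fun i => by simp [Module.Basis.span_apply]⟩

end Triangular

section IshArrangement

variable (K : Type*) [Field K] (m : ℕ)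

local notation "𝒮" => MvPolynomial (Option (Fin (m + 1))) K

def ishRoot : ℕ ⊕ Fin (m + 1) → 𝒮 :=
  Sum.elim (fun c => X (some 0) - C (c : K) * X none) (fun j => X (some j))

def ishRoots (t : Fin (m + 1)) : Finset (ℕ ⊕ Fin (m + 1)) :=
  (Finset.range (t + 1)).disjSum (Finset.Ioi t)

def ishPoly (t : Fin (m + 1)) : Polynomial 𝒮 :=
  ∏ a ∈ ishRoots m t, (Polynomial.X - Polynomial.C (ishRoot K m a))

variable {K m}

@[simp]
theorem inl_mem_ishRoots {t : Fin (m + 1)} {c : ℕ} : Sum.inl c ∈ ishRoots m t ↔ c ≤ t := by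
  simp [ishRoots]

@[simp]
theorem inr_mem_ishRoots {t j : Fin (m + 1)} : Sum.inr j ∈ ishRoots m t ↔ t < j := by
  simp [ishRoots]

theorem card_ishRoots (t : Fin (m + 1)) : (ishRoots m t).card = m + 1 := by
  rw [ishRoots, Finset.card_disjSum, Finset.card_range, Fin.card_Ioi]
  omega

theorem X_none_mem_coneIshL : (X none : 𝒮) ∈ coneIshL K m :=
  Or.inl (Or.inl rfl)

theorem X_sub_X_mem_coneIshL {i j : Fin (m + 1)} (h : i < j) :
    (X (some i) - X (some j) : 𝒮) ∈ coneIshL K m :=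
  Or.inl (Or.inr ⟨i, j, h, rfl⟩)

theorem X_zero_sub_X_sub_mem_coneIshL {j : Fin (m + 1)} (hj : j ≠ 0) {c : ℕ} (hc : c ≤ j) :
    (X (some 0) - X (some j) - C (c : K) * X none : 𝒮) ∈ coneIshL K m := by
  rcases c with _ | c
  · simpa using X_sub_X_mem_coneIshL (Fin.pos_iff_ne_zero.mpr hj)
  · exact Or.inr ⟨⟨c, by omega⟩, j, Fin.lt_def.mpr hc, by push_cast; rfl⟩

theorem isHomogeneous_ishRoot (a : ℕ ⊕ Fin (m + 1)) : (ishRoot K m a).IsHomogeneous 1 := by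
  rcases a with c | j
  · exact (isHomogeneous_X K _).sub (isHomogeneous_C_mul_X _ _)
  · exact isHomogeneous_X K _

theorem notMem_vars_ishRoot {t : Fin (m + 1)} (ht : t ≠ 0) {a : ℕ ⊕ Fin (m + 1)}
    (ha : a ∈ ishRoots m t) : some t ∉ (ishRoot K m a).vars := by
  rcases a with c | j
  · intro h
    have := (Finset.union_subset_union subset_rfl (vars_mul _ _)) (vars_sub_subset _ h)
    simp only [vars_X, vars_C, Finset.empty_union, Finset.mem_union,
      Finset.mem_singleton, Option.some.injEq, reduceCtorEq, or_false] at this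
    exact ht this
  · simpa [ishRoot, vars_X] using (inr_mem_ishRoots.mp ha).ne

theorem ishRoot_inl_ne_inr (c : ℕ) {j : Fin (m + 1)} (hj : j ≠ 0) :
    ishRoot K m (.inl c) ≠ ishRoot K m (.inr j) := fun h =>
  hj (by simpa [ishRoot] using congrArg (eval fun v => if v = some 0 then (1 : K) else 0) h)

theorem ishRoot_injOn [CharZero K] (t : Fin (m + 1)) :
    Set.InjOn (ishRoot K m) (ishRoots m t) := by
  rintro (c | j) ha (c' | j') hb h
  · simpa [ishRoot, X_ne_zero] using h
  · exact absurd h (ishRoot_inl_ne_inr c (inr_mem_ishRoots.mp hb).ne_bot)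
  · exact absurd h.symm (ishRoot_inl_ne_inr c' (inr_mem_ishRoots.mp ha).ne_bot)
  · simpa [ishRoot] using h

theorem ishPoly_eval_ishRoot {t : Fin (m + 1)} {a : ℕ ⊕ Fin (m + 1)} (ha : a ∈ ishRoots m t) :
    (ishPoly K m t).eval (ishRoot K m a) = 0 := by
  rw [ishPoly, Polynomial.eval_prod]
  exact Finset.prod_eq_zero ha (by simp)

theorem ishPoly_eval_sub {t : Fin (m + 1)} {c : ℕ} (hc : c ≤ t) :
    (ishPoly K m t).eval (X (some 0) - C (c : K) * X none) = 0 :=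
  ishPoly_eval_ishRoot (a := .inl c) (inl_mem_ishRoots.mpr hc)

theorem ishPoly_eval_X_zero (t : Fin (m + 1)) : (ishPoly K m t).eval (X (some 0)) = 0 := by
  simpa using ishPoly_eval_sub (K := K) (Nat.zero_le t)

theorem ishPoly_eval_X_of_lt {t j : Fin (m + 1)} (h : t < j) :
    (ishPoly K m t).eval (X (some j)) = 0 :=
  ishPoly_eval_ishRoot (a := .inr j) (inr_mem_ishRoots.mpr h)

theorem ishPoly_eval_X (t j : Fin (m + 1)) :
    (ishPoly K m t).eval (X (some j)) = ∏ a ∈ ishRoots m t, (X (some j) - ishRoot K m a) := by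
  simp [ishPoly, Polynomial.eval_prod]

theorem isHomogeneous_ishPoly_eval_X (t j : Fin (m + 1)) :
    ((ishPoly K m t).eval (X (some j))).IsHomogeneous (m + 1) := by
  have := IsHomogeneous.prod (ishRoots m t) _ (fun _ => 1)
    fun a _ => (isHomogeneous_X K (some j)).sub (isHomogeneous_ishRoot a)
  simpa [ishPoly_eval_X, card_ishRoots] using this

theorem ishPoly_eval_X_self_ne_zero {t : Fin (m + 1)} (ht : t ≠ 0) :
    (ishPoly K m t).eval (X (some t)) ≠ 0 := by
  rw [ishPoly_eval_X, Finset.prod_ne_zero_iff]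
  exact fun a ha => X_sub_ne_zero_of_notMem_vars (notMem_vars_ishRoot ht ha)

theorem ishPoly_eval_X_self_dvd [CharZero K] {t : Fin (m + 1)} (ht : t ≠ 0)
    {θ : Derivation K 𝒮 𝒮} (hθ : θ ∈ logDer K (coneIshL K m)) (hz : θ (X none) = 0)
    (h0 : θ (X (some 0)) = 0) (hgt : ∀ j, t < j → θ (X (some j)) = 0) :
    (ishPoly K m t).eval (X (some t)) ∣ θ (X (some t)) := by
  rw [mem_logDer_iff] at hθ
  rw [ishPoly_eval_X]
  refine prod_X_sub_dvd_of_forall_dvd (ishRoot_injOn t)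
    (fun a ha => notMem_vars_ishRoot ht ha) ?_
  rintro (c | j) ha
  · have := hθ _ (X_zero_sub_X_sub_mem_coneIshL ht (inl_mem_ishRoots.mp ha))
    rw [map_sub, map_sub, C_mul', θ.map_smul, h0, hz, smul_zero, sub_zero, zero_sub, dvd_neg,
      ← C_mul'] at this
    have hroot : X (some t) - ishRoot K m (.inl c)
        = -(X (some 0) - X (some t) - C (c : K) * X none) := by
      simp only [ishRoot, Sum.elim_inl]; ring
    rwa [hroot, neg_dvd]
  · have hj := inr_mem_ishRoots.mp ha
    have := hθ _ (X_sub_X_mem_coneIshL hj)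
    rwa [map_sub, hgt j hj, sub_zero] at this

variable (K m)

def translationDerivation : Derivation K 𝒮 𝒮 := mkDerivation K fun v => v.elim 0 fun _ => 1

def eulerDerivation : Derivation K 𝒮 𝒮 := mkDerivation K X

def ishDerivation (t : Fin (m + 1)) : Derivation K 𝒮 𝒮 :=
  mkDerivation K fun v => v.elim 0 fun j => (ishPoly K m t).eval (X (some j))

variable {K m}

@[simp]
theorem translationDerivation_X_none : translationDerivation K m (X none) = 0 :=
  mkDerivation_X ..

@[simp]
theorem translationDerivation_X_some (j : Fin (m + 1)) :
    translationDerivation K m (X (some j)) = 1 :=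
  mkDerivation_X ..

@[simp]
theorem eulerDerivation_X (v : Option (Fin (m + 1))) : eulerDerivation K m (X v) = X v :=
  mkDerivation_X ..

@[simp]
theorem ishDerivation_X_none (t : Fin (m + 1)) : ishDerivation K m t (X none) = 0 :=
  mkDerivation_X ..

@[simp]
theorem ishDerivation_X_some (t j : Fin (m + 1)) :
    ishDerivation K m t (X (some j)) = (ishPoly K m t).eval (X (some j)) :=
  mkDerivation_X ..

theorem translationDerivation_mem : translationDerivation K m ∈ logDer K (coneIshL K m) := by
  rw [mem_logDer_iff]
  rintro α ((rfl | ⟨i, j, -, rfl⟩) | ⟨i, j, -, rfl⟩) <;> simp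

theorem eulerDerivation_mem : eulerDerivation K m ∈ logDer K (coneIshL K m) := by
  rw [mem_logDer_iff]
  rintro α ((rfl | ⟨i, j, -, rfl⟩) | ⟨i, j, -, rfl⟩) <;> simp

theorem ishDerivation_mem (t : Fin (m + 1)) :
    ishDerivation K m t ∈ logDer K (coneIshL K m) := by
  rw [mem_logDer_iff]
  rintro α ((rfl | ⟨i, j, -, rfl⟩) | ⟨i, j, hij, rfl⟩)
  · simp
  · simpa using Polynomial.sub_dvd_eval_sub _ _ _
  · have hθ : ishDerivation K m t (X (some 0) - X (some j) - C ((i : ℕ) + 1 : K) * X none)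
        = -(ishPoly K m t).eval (X (some j)) := by
      simp [ishPoly_eval_X_zero]
    rw [hθ, dvd_neg]
    by_cases hit : (i : ℕ) + 1 ≤ t
    · have := Polynomial.sub_dvd_eval_sub (X (some 0) - C (((i : ℕ) + 1 : ℕ) : K) * X none)
        (X (some j)) (ishPoly K m t)
      rwa [ishPoly_eval_sub hit, zero_sub, dvd_neg, Nat.cast_succ, sub_right_comm] at this
    · rw [ishPoly_eval_X_of_lt (by omega)]
      exact dvd_zero _

theorem isHomogDeriv_translationDerivation : IsHomogDeriv (translationDerivation K m) 0 := by
  rintro (_ | j) <;> simp [isHomogeneous_zero, isHomogeneous_one]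

theorem isHomogDeriv_eulerDerivation : IsHomogDeriv (eulerDerivation K m) 1 := fun v => by
  simpa using isHomogeneous_X K v

theorem isHomogDeriv_ishDerivation (t : Fin (m + 1)) :
    IsHomogDeriv (ishDerivation K m t) (m + 1) := by
  rintro (_ | j)
  · simpa using isHomogeneous_zero _ _ _
  · simpa using isHomogeneous_ishPoly_eval_X t j

variable (K m)

def ishBasisDerivation : Fin (m + 2) → Derivation K 𝒮 𝒮 :=
  Fin.cases (translationDerivation K m)
    (Fin.cases (eulerDerivation K m) fun k => ishDerivation K m k.succ)

/-- In order of increasing `ishPivotRank` the pivots are `z, x₀, x_m, x_{m-1}, …, x₁`. -/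
def ishPivot : Fin (m + 2) → Option (Fin (m + 1)) :=
  Fin.cases (some 0) (Fin.cases none fun k => some k.succ)

def ishPivotRank : Fin (m + 2) → ℕ :=
  Fin.cases 1 (Fin.cases 0 fun k => m + 1 - k)

variable {K m}

theorem ishPivot_surjective : Function.Surjective (ishPivot m) := by
  rintro (_ | j)
  · exact ⟨1, rfl⟩
  · exact Fin.cases ⟨0, rfl⟩ (fun k => ⟨k.succ.succ, rfl⟩) j

theorem derivation_eq_zero_of_forall_ishPivot {θ : Derivation K 𝒮 𝒮}
    (h : ∀ i, θ (X (ishPivot m i)) = 0) : θ = 0 :=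
  derivation_ext fun v => by
    obtain ⟨i, rfl⟩ := ishPivot_surjective v
    exact h i

theorem ishPivotRank_injective : Function.Injective (ishPivotRank m) := by
  simp only [Function.Injective, Fin.forall_fin_succ, ishPivotRank, Fin.cases_zero,
    Fin.cases_succ, Fin.ext_iff, Fin.val_succ]
  refine ⟨⟨by simp, by simp, fun k => by omega⟩, ⟨by simp, by simp, fun k => by omega⟩,
    fun k => ⟨by omega, by omega, fun k' => by omega⟩⟩

theorem ishBasisDerivation_mem : ∀ i, ishBasisDerivation K m i ∈ logDer K (coneIshL K m) :=
  Fin.cases translationDerivation_mem (Fin.cases eulerDerivation_mem fun _ => ishDerivation_mem _)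

theorem isHomogDeriv_ishBasisDerivation : ∀ i : Fin (m + 2),
    IsHomogDeriv (ishBasisDerivation K m i)
      (if i.val = 0 then 0 else if i.val = 1 then 1 else m + 1) :=
  Fin.cases
    (by show IsHomogDeriv (translationDerivation K m) _
        simpa using isHomogDeriv_translationDerivation)
    (Fin.cases
      (by show IsHomogDeriv (eulerDerivation K m) _
          simpa using isHomogDeriv_eulerDerivation)
      fun k => by
        show IsHomogDeriv (ishDerivation K m k.succ) _
        simpa using isHomogDeriv_ishDerivation k.succ)

theorem ishBasisDerivation_pivot_ne_zero :
    ∀ i, ishBasisDerivation K m i (X (ishPivot m i)) ≠ 0 :=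
  Fin.cases (by simp [ishBasisDerivation, ishPivot])
    (Fin.cases (by show eulerDerivation K m (X none) ≠ 0; simp [X_ne_zero])
      fun k => by
        show ishDerivation K m k.succ (X (some k.succ)) ≠ 0
        simpa using ishPoly_eval_X_self_ne_zero k.succ_ne_zero)

theorem ishBasisDerivation_pivot_eq_zero : ∀ i j, ishPivotRank m i < ishPivotRank m j →
    ishBasisDerivation K m j (X (ishPivot m i)) = 0 := by
  refine Fin.cases ?_ (Fin.cases ?_ fun k => ?_) <;>
    refine Fin.cases ?_ (Fin.cases ?_ fun k' => ?_) <;>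
    simp only [ishPivotRank, ishPivot, ishBasisDerivation, Fin.cases_zero, Fin.cases_succ] <;>
    intro h
  all_goals first | omega | simp [ishPoly_eval_X_zero]
  exact ishPoly_eval_X_of_lt (Fin.succ_lt_succ_iff.mpr (by omega))

theorem ishBasisDerivation_pivot_dvd [CharZero K] {θ : Derivation K 𝒮 𝒮}
    (hθ : θ ∈ logDer K (coneIshL K m)) : ∀ i,
    (∀ j, ishPivotRank m j < ishPivotRank m i → θ (X (ishPivot m j)) = 0) →
      ishBasisDerivation K m i (X (ishPivot m i)) ∣ θ (X (ishPivot m i)) := by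
  refine Fin.cases ?_ (Fin.cases ?_ fun k => ?_) <;>
    simp only [ishPivotRank, ishPivot, ishBasisDerivation, Fin.cases_zero, Fin.cases_succ] <;>
    intro h
  · simp
  · simpa using mem_logDer_iff.mp hθ _ X_none_mem_coneIshL
  · have hrank : ∀ j, ishPivotRank m j < m + 1 - k → θ (X (ishPivot m j)) = 0 := h
    rw [ishDerivation_X_some]
    refine ishPoly_eval_X_self_dvd k.succ_ne_zero hθ (hrank (Fin.succ 0) ?_) (hrank 0 ?_)
      fun j hj => ?_
    · simp only [ishPivotRank, Fin.cases_zero, Fin.cases_succ]; omega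
    · simp only [ishPivotRank, Fin.cases_zero]; omega
    obtain ⟨j, rfl⟩ := Fin.exists_succ_eq.mpr (Fin.ne_zero_of_lt hj)
    have := Fin.succ_lt_succ_iff.mp hj
    exact hrank j.succ.succ (by simp only [ishPivotRank, Fin.cases_succ]; omega)

end IshArrangement

/-- The cone over the Ish arrangement `Ish_ℓ` (here `ℓ = m+1 ≥ 1`) is free with
exponents (0, 1, ℓ, ℓ, …, ℓ), where ℓ appears ℓ−1 times: there is a basis of the
module of logarithmic derivations consisting of homogeneous derivations of degrees
0, 1, ℓ, …, ℓ. -/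
theorem cone_ish_free (K : Type*) [Field K] [CharZero K] (m : ℕ) :
    ∃ b : Module.Basis (Fin (m + 2)) (MvPolynomial (Option (Fin (m + 1))) K)
        (logDer K (coneIshL K m)),
      ∀ i, IsHomogDeriv
        ((b i : Derivation K (MvPolynomial (Option (Fin (m + 1))) K)
          (MvPolynomial (Option (Fin (m + 1))) K)))
        (if i.val = 0 then 0 else if i.val = 1 then 1 else m + 1) := by
  obtain ⟨b, hb⟩ := Submodule.exists_basis_of_triangular
    (v := ishBasisDerivation K m) (φ := fun i => Derivation.applyₗ (R := K) (X (ishPivot m i)))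
    ishPivotRank_injective ishBasisDerivation_mem ishBasisDerivation_pivot_ne_zero
    ishBasisDerivation_pivot_eq_zero (fun _ _ => derivation_eq_zero_of_forall_ishPivot)
    (fun _ hθ => ishBasisDerivation_pivot_dvd hθ)
  exact ⟨b, fun i => hb i ▸ isHomogDeriv_ishBasisDerivation i⟩

end
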